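/- arXiv:1712.01016 — 3 statements merged into one kernel-verified Lean document; each statement's English description precedes it below -/
import Mathlib

section
/- Let N > 0, S ≥ 1, and let U = {u, u+1, ..., u+2S−1} ⊂ {0,...,N−1} be a set of 2S consecutive indices. Let x, x̃ ∈ ℂ^N each have at most S nonzero components. If the discrete Fourier transforms agree on U, i.e., (F x)_ω = (F x̃)_ω for all ω ∈ U, then x = x̃. -/
/-- The discrete Fourier transform on `ℂ^N`. -/
noncomputable def dft (N : ℕ) (y : Fin N → ℂ) (k : Fin N) : ℂ :=
  (1 / Real.sqrt N : ℝ) *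
    ∑ t : Fin N, Complex.exp (-(Complex.I * 2 * (Real.pi : ℂ) * (k.val : ℂ) * (t.val : ℂ) / (N : ℂ))) * y t

theorem stmt9 (N S u : ℕ) (hN : 0 < N) (hS : 1 ≤ S) (hU : u + 2 * S ≤ N)
    (x x' : Fin N → ℂ)
    (hx : {k : Fin N | x k ≠ 0}.ncard ≤ S) (hx' : {k : Fin N | x' k ≠ 0}.ncard ≤ S)
    (hobs : ∀ ω : Fin N, u ≤ ω.val → ω.val < u + 2 * S → dft N x ω = dft N x' ω) :
    x = x' := by
  classical
  set d : Fin N → ℂ := fun k => x k - x' k with hd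
  suffices hd0 : ∀ k, d k = 0 by
    funext k; have := hd0 k; simpa [hd, sub_eq_zero] using this
  set ζ : ℂ := Complex.exp (-(2 * (Real.pi : ℂ) * Complex.I) / N) with hζ
  have hNC : (N : ℂ) ≠ 0 := Nat.cast_ne_zero.mpr hN.ne'
  have hζprim : IsPrimitiveRoot ζ N := by
    have h := (Complex.isPrimitiveRoot_exp N hN.ne').inv
    rwa [← Complex.exp_neg, ← neg_div] at h
  have hζne : ζ ≠ 0 := Complex.exp_ne_zero _
  -- exponent lemma
  have key : ∀ a t : ℕ,
      Complex.exp (-(Complex.I * 2 * (Real.pi : ℂ) * (a : ℂ) * (t : ℂ) / (N : ℂ))) = ζ ^ (a * t) := by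
    intro a t
    rw [hζ, ← Complex.exp_nat_mul]
    congr 1
    push_cast
    ring
  -- the difference sums vanish on U
  have hsum : ∀ ω : Fin N, u ≤ ω.val → ω.val < u + 2 * S →
      ∑ t : Fin N, ζ ^ (ω.val * t.val) * d t = 0 := by
    intro ω h1 h2
    have h := hobs ω h1 h2
    unfold dft at h
    have hc : ((1 / Real.sqrt N : ℝ) : ℂ) ≠ 0 := by
      simp only [ne_eq, Complex.ofReal_eq_zero, one_div, inv_eq_zero]
      exact fun hh => by
        have := Real.sqrt_pos.mpr (by exact_mod_cast hN : (0:ℝ) < N)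
        linarith [hh ▸ this]
    have h' := mul_left_cancel₀ hc h
    have : ∑ t : Fin N,
        Complex.exp (-(Complex.I * 2 * (Real.pi : ℂ) * (ω.val : ℂ) * (t.val : ℂ) / (N : ℂ))) * d t = 0 := by
      simp only [hd, mul_sub]
      rw [Finset.sum_sub_distrib, h', sub_self]
    simpa only [key ω.val] using this
  -- support of d
  set T : Finset (Fin N) := Finset.univ.filter (fun k => d k ≠ 0) with hT
  have hTcard : T.card ≤ 2 * S := by
    have hsub : T ⊆ (Finset.univ.filter (fun k => x k ≠ 0)) ∪
        (Finset.univ.filter (fun k => x' k ≠ 0)) := by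
      intro k hk
      simp only [hT, Finset.mem_filter, Finset.mem_univ, true_and] at hk
      simp only [Finset.mem_union, Finset.mem_filter, Finset.mem_univ, true_and]
      by_contra hcon
      push_neg at hcon
      exact hk (by simp [hd, hcon.1, hcon.2])
    have h1 : (Finset.univ.filter (fun k => x k ≠ 0)).card ≤ S := by
      have : {k : Fin N | x k ≠ 0}.ncard = (Finset.univ.filter (fun k => x k ≠ 0)).card := by
        rw [Set.ncard_eq_toFinset_card']
        congr 1
        ext k; simp
      omega
    have h2 : (Finset.univ.filter (fun k => x' k ≠ 0)).card ≤ S := by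
      have : {k : Fin N | x' k ≠ 0}.ncard = (Finset.univ.filter (fun k => x' k ≠ 0)).card := by
        rw [Set.ncard_eq_toFinset_card']
        congr 1
        ext k; simp
      omega
    calc T.card ≤ _ := Finset.card_le_card hsub
      _ ≤ _ := Finset.card_union_le _ _
      _ ≤ 2 * S := by omega
  set m := T.card with hm
  set e : Fin m ≃ T := T.equivFin.symm with he
  set v : Fin m → ℂ := fun i => ζ ^ ((e i : Fin N) : ℕ) with hv
  have hvinj : Function.Injective v := by
    intro i j hij
    have h1 : ((e i : Fin N) : ℕ) < N := (e i : Fin N).isLt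
    have h2 : ((e j : Fin N) : ℕ) < N := (e j : Fin N).isLt
    have := hζprim.pow_inj h1 h2 hij
    exact e.injective (Subtype.ext (Fin.ext this))
  set w : Fin m → ℂ := fun i => ζ ^ (u * ((e i : Fin N) : ℕ)) * d (e i : Fin N) with hw
  -- the Vandermonde system
  have hmul : (Matrix.vandermonde v).transpose.mulVec w = 0 := by
    funext j
    have hjN : u + (j : ℕ) < N := by
      have := j.isLt
      omega
    have hω := hsum ⟨u + (j : ℕ), hjN⟩ (Nat.le_add_right _ _) (by show u + (j : ℕ) < u + 2 * S; have := j.isLt; omega)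
    simp only [Matrix.mulVec, Matrix.transpose_apply, Matrix.vandermonde, dotProduct,
      Pi.zero_apply]
    -- restrict the sum to T
    have hrestrict : ∑ t : Fin N, ζ ^ ((u + (j : ℕ)) * t.val) * d t
        = ∑ t ∈ T, ζ ^ ((u + (j : ℕ)) * t.val) * d t := by
      rw [← Finset.sum_filter_add_sum_filter_not Finset.univ (fun k => d k ≠ 0)]
      have : ∑ t ∈ Finset.univ.filter (fun k => ¬ d k ≠ 0), ζ ^ ((u + (j : ℕ)) * t.val) * d t = 0 := by
        apply Finset.sum_eq_zero
        intro t ht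
        simp only [Finset.mem_filter, not_not] at ht
        rw [ht.2, mul_zero]
      rw [this, add_zero]
    have hequiv : ∑ t ∈ T, ζ ^ ((u + (j : ℕ)) * t.val) * d t
        = ∑ i : Fin m, ζ ^ ((u + (j : ℕ)) * ((e i : Fin N) : ℕ)) * d (e i : Fin N) := by
      rw [← Finset.sum_attach T (fun t => ζ ^ ((u + (j : ℕ)) * t.val) * d t)]
      exact (Equiv.sum_comp e (fun t : T => ζ ^ ((u + (j : ℕ)) * ((t : Fin N) : ℕ)) * d (t : Fin N))).symm
    have hterm : ∀ i : Fin m,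
        ζ ^ ((u + (j : ℕ)) * ((e i : Fin N) : ℕ)) * d (e i : Fin N) = v i ^ (j : ℕ) * w i := by
      intro i
      rw [hv, hw]
      rw [← pow_mul]
      rw [show (u + (j : ℕ)) * ((e i : Fin N) : ℕ)
        = ((e i : Fin N) : ℕ) * (j : ℕ) + u * ((e i : Fin N) : ℕ) by ring, pow_add]
      ring
    rw [hrestrict, hequiv] at hω
    calc ∑ i : Fin m, v i ^ (j : ℕ) * w i
        = ∑ i : Fin m, ζ ^ ((u + (j : ℕ)) * ((e i : Fin N) : ℕ)) * d (e i : Fin N) := by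
          exact Finset.sum_congr rfl fun i _ => (hterm i).symm
      _ = 0 := hω
  have hdet : ((Matrix.vandermonde v).transpose).det ≠ 0 := by
    rw [Matrix.det_transpose, Matrix.det_vandermonde]
    apply Finset.prod_ne_zero_iff.mpr
    intro i _
    apply Finset.prod_ne_zero_iff.mpr
    intro j hj
    simp only [Finset.mem_Ioi] at hj
    exact sub_ne_zero.mpr fun hc => absurd (hvinj hc) hj.ne'
  have hw0 : w = 0 := Matrix.eq_zero_of_mulVec_eq_zero hdet hmul
  -- conclude d = 0
  intro k
  by_contra hk
  have hkT : k ∈ T := by simp [hT, hk]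
  set i := e.symm ⟨k, hkT⟩ with hi
  have : w i = 0 := by rw [hw0]; rfl
  rw [hw] at this
  simp only [hi, Equiv.apply_symm_apply] at this
  rcases mul_eq_zero.mp this with h | h
  · exact pow_ne_zero _ hζne h
  · exact hk h
end

section
/- Let N > 0, S ≥ 1 with S ≤ N, and ν ≥ 2, M ≥ 1 integers. Let Y_{ν,M} ⊂ ℂ^N be the set of vectors whose k-th component equals ζ_{ν,M,k}(x_k) = ρ_{ν,M}(x_k) + ν^{-M-k}𝟙_{x_k≠0}. Then the set U = {0, 1, ..., S−1} is a uniqueness set in the frequency domain with respect to Y_{ν,M} ∩ X_S: any x ∈ Y_{ν,M} with at most S nonzero components is uniquely determined by (F x)_0, ..., (F x)_{S−1}. -/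
/-- Integer truncation toward zero. -/
noncomputable def trunc (a : ℝ) : ℤ := if 0 ≤ a then ⌊a⌋ else ⌈a⌉

/-- Rounding of a real number to precision `ν^(-μ)`, toward zero. -/
noncomputable def rnd (ν μ : ℕ) (a : ℝ) : ℝ :=
  ((ν : ℝ)) ^ (-(μ : ℤ)) * (trunc ((ν : ℝ) ^ (μ : ℤ) * a) : ℤ)

/-- Componentwise rounding of a complex number. -/
noncomputable def rndC (ν μ : ℕ) (z : ℂ) : ℂ :=
  (rnd ν μ z.re : ℝ) + (rnd ν μ z.im : ℝ) * Complex.I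

/-- `ζ_{ν,M,k}(z) = ρ_{ν,M}(z) + ν^{-M-k}·𝟙_{z≠0}`. -/
noncomputable def zetaMark (ν M k : ℕ) (z : ℂ) : ℂ :=
  rndC ν M z + ((ν : ℂ) ^ (-(M : ℤ) - (k : ℤ))) * (if z ≠ 0 then 1 else 0)

/-- The class `Y_{ν,M}` of sequences whose components carry the support markers. -/
noncomputable def Ymark (ν M N : ℕ) : Set (Fin N → ℂ) :=
  {x | ∀ k : Fin N, x k = zetaMark ν M k.val (x k)}

open Finset

/-! ### Auxiliary lemmas -/

/-- Uniqueness of bounded digit expansions. -/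
lemma digitsUnique {ν : ℕ} (hν : 2 ≤ ν) :
    ∀ (n : ℕ) (f g : ℕ → ℕ), (∀ i, f i < ν) → (∀ i, g i < ν) →
    (∑ i ∈ Finset.range n, f i * ν ^ i) = (∑ i ∈ Finset.range n, g i * ν ^ i) →
    ∀ i, i < n → f i = g i := by
  intro n
  induction n with
  | zero => intro f g _ _ _ i hi; omega
  | succ n ih =>
    intro f g hf hg hsum i hi
    have key : ∀ h : ℕ → ℕ, ∑ i ∈ Finset.range (n+1), h i * ν ^ i
        = h 0 + ν * ∑ i ∈ Finset.range n, h (i+1) * ν ^ i := by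
      intro h
      rw [Finset.sum_range_succ', pow_zero, mul_one, Finset.mul_sum, add_comm]
      congr 1
      refine Finset.sum_congr rfl fun i _ => ?_
      ring
    rw [key f, key g] at hsum
    have h0 : f 0 = g 0 := by
      have h1 : (f 0 + ν * ∑ i ∈ Finset.range n, f (i+1) * ν ^ i) % ν
          = (g 0 + ν * ∑ i ∈ Finset.range n, g (i+1) * ν ^ i) % ν := by rw [hsum]
      rwa [Nat.add_mul_mod_self_left, Nat.add_mul_mod_self_left,
        Nat.mod_eq_of_lt (hf 0), Nat.mod_eq_of_lt (hg 0)] at h1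
    have hAB : (∑ i ∈ Finset.range n, f (i+1) * ν ^ i)
        = ∑ i ∈ Finset.range n, g (i+1) * ν ^ i := by
      have h2 : ν * (∑ i ∈ Finset.range n, f (i+1) * ν ^ i)
          = ν * ∑ i ∈ Finset.range n, g (i+1) * ν ^ i := by omega
      exact Nat.eq_of_mul_eq_mul_left (by omega) h2
    match i, hi with
    | 0, _ => exact h0
    | (j+1), hj => exact ih (fun i => f (i+1)) (fun i => g (i+1)) (fun i => hf _) (fun i => hg _) hAB j (by omega)

/-- Geometric bound. -/
lemma geomBound {ν : ℕ} (hν : 2 ≤ ν) (n : ℕ) : (∑ i ∈ Finset.range n, ν ^ i) < ν ^ n := by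
  induction n with
  | zero => simp
  | succ n ih =>
    rw [Finset.sum_range_succ, pow_succ]
    have : ν ^ n * 2 ≤ ν ^ n * ν := Nat.mul_le_mul_left _ hν
    omega

/-- Vandermonde-type vanishing. -/
lemma vandermonde_vanish {ι : Type*} [DecidableEq ι] {S : ℕ} (D : Finset ι) (v : ι → ℂ)
    (hinj : Set.InjOn v D) (d : ι → ℂ) (hcard : D.card ≤ S)
    (hrows : ∀ m, m < S → ∑ t ∈ D, v t ^ m * d t = 0) :
    ∀ t ∈ D, d t = 0 := by
  intro t₀ ht₀
  set p := Lagrange.basis D v t₀ with hp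
  have hdegeq : p.natDegree = D.card - 1 :=
    Polynomial.natDegree_eq_of_degree_eq_some (Lagrange.degree_basis hinj ht₀)
  have hCpos : 1 ≤ D.card := Finset.card_pos.mpr ⟨t₀, ht₀⟩
  have hdeg : p.natDegree < S := by omega
  have hsum0 : ∑ t ∈ D, p.eval (v t) * d t = 0 := by
    calc ∑ t ∈ D, p.eval (v t) * d t
        = ∑ t ∈ D, ∑ i ∈ Finset.range S, p.coeff i * (v t ^ i * d t) := by
          refine Finset.sum_congr rfl fun t _ => ?_
          rw [Polynomial.eval_eq_sum_range' hdeg, Finset.sum_mul]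
          exact Finset.sum_congr rfl fun i _ => by ring
      _ = ∑ i ∈ Finset.range S, p.coeff i * ∑ t ∈ D, v t ^ i * d t := by
          rw [Finset.sum_comm]
          exact Finset.sum_congr rfl fun i _ => by rw [Finset.mul_sum]
      _ = 0 := by
          refine Finset.sum_eq_zero fun i hi => ?_
          rw [hrows i (Finset.mem_range.mp hi), mul_zero]
  have hsingle : ∑ t ∈ D, p.eval (v t) * d t = d t₀ := by
    rw [Finset.sum_eq_single t₀]
    · rw [Lagrange.eval_basis_self hinj ht₀, one_mul]
    · intro t ht hne
      rw [Lagrange.eval_basis_of_ne (Ne.symm hne) ht, zero_mul]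
    · intro h; exact absurd ht₀ h
  rw [hsingle] at hsum0
  exact hsum0

/-- Injectivity of the DFT nodes. -/
lemma nodes_inj (n : ℕ) :
    Function.Injective (fun t : Fin (n+1) =>
      Complex.exp (-(Complex.I * 2 * (Real.pi : ℂ) * (t.val : ℂ) / ((n+1 : ℕ) : ℂ)))) := by
  intro s t h
  simp only at h
  rw [Complex.exp_eq_exp_iff_exists_int] at h
  obtain ⟨m, hm⟩ := h
  have hNne : ((n : ℂ) + 1) ≠ 0 := by
    have : ((n+1 : ℕ) : ℂ) ≠ 0 := Nat.cast_ne_zero.mpr (Nat.succ_ne_zero n)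
    push_cast at this; exact this
  have hpi : (Real.pi : ℂ) ≠ 0 := Complex.ofReal_ne_zero.mpr Real.pi_ne_zero
  have hI : Complex.I ≠ 0 := Complex.I_ne_zero
  push_cast at hm
  field_simp at hm
  have key : (2 * (Real.pi : ℂ) * Complex.I * ((n : ℂ) + 1)) * ((t.val : ℂ) - (s.val : ℂ) - m * ((n : ℂ) + 1)) = 0 := by
    linear_combination (2 * (Real.pi : ℂ) * Complex.I * ((n : ℂ) + 1)) * hm
  have h2 : ((t.val : ℂ) - (s.val : ℂ) - m * ((n : ℂ) + 1)) = 0 := by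
    rcases mul_eq_zero.mp key with h | h
    · exact absurd h (mul_ne_zero (mul_ne_zero (mul_ne_zero two_ne_zero hpi) hI) hNne)
    · exact h
  have h3 : (t.val : ℤ) - (s.val : ℤ) - m * ((n : ℤ) + 1) = 0 := by
    exact_mod_cast h2
  have hs := s.isLt
  have ht := t.isLt
  have hdvd : ((n : ℤ) + 1) ∣ ((t.val : ℤ) - (s.val : ℤ)) := ⟨m, by linarith⟩
  have habs : |(t.val : ℤ) - (s.val : ℤ)| < (n : ℤ) + 1 := abs_sub_lt_iff.mpr ⟨by omega, by omega⟩
  have h0 := Int.eq_zero_of_abs_lt_dvd hdvd habs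
  apply Fin.ext
  omega

noncomputable def epsF {N : ℕ} (y : Fin N → ℂ) (k : Fin N) : ℕ :=
  if y k ≠ 0 then 1 else 0

noncomputable def aF (ν M : ℕ) {N : ℕ} (y : Fin N → ℂ) (k : Fin N) : ℤ :=
  trunc ((ν : ℝ) ^ (M : ℤ) * (y k).re)

noncomputable def eF {N : ℕ} (y : Fin N → ℂ) (j : ℕ) : ℕ :=
  if h : j < N then (if y ⟨j, h⟩ ≠ 0 then 1 else 0) else 0

/-- Real part structure of a marked vector. -/
lemma re_eq {ν M N : ℕ} {y : Fin N → ℂ} (hy : y ∈ Ymark ν M N) (k : Fin N) :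
    (y k).re = (ν : ℝ) ^ (-(M : ℤ)) * (aF ν M y k : ℤ)
      + (ν : ℝ) ^ (-(M : ℤ) - (k.val : ℤ)) * (epsF y k : ℕ) := by
  have h1 := hy k
  conv_lhs => rw [h1]
  simp only [zetaMark, rndC, rnd, aF, epsF, Complex.add_re, Complex.add_im,
    Complex.ofReal_re, Complex.mul_re, Complex.I_re, Complex.ofReal_im, Complex.I_im]
  have hre2 : ((ν:ℂ) ^ (-(M:ℤ) - (k.val:ℤ))).re = (ν : ℝ) ^ (-(M:ℤ) - (k.val:ℤ)) := by
    rw [show ((ν:ℂ)) = (((ν:ℝ)):ℂ) by push_cast; ring, ← Complex.ofReal_zpow, Complex.ofReal_re]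
  have him2 : ((ν:ℂ) ^ (-(M:ℤ) - (k.val:ℤ))).im = 0 := by
    rw [show ((ν:ℂ)) = (((ν:ℝ)):ℂ) by push_cast; ring, ← Complex.ofReal_zpow, Complex.ofReal_im]
  split_ifs with h <;>
    simp [hre2, him2, Complex.ofReal_re, Complex.ofReal_im, Complex.one_re, Complex.one_im]

lemma J_cast {ν M n : ℕ} (hν : 2 ≤ ν) {y : Fin (n+1) → ℂ} (hy : y ∈ Ymark ν M (n+1)) :
    ((∑ k : Fin (n+1), ((ν:ℤ)^n * aF ν M y k + (ν:ℤ)^(n - k.val) * (epsF y k : ℤ))) : ℝ)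
      = (ν:ℝ)^(M+n) * ∑ k : Fin (n+1), (y k).re := by
  have hνne : (ν:ℝ) ≠ 0 := Nat.cast_ne_zero.mpr (by omega)
  have hterm : ∀ k : Fin (n+1), (ν:ℝ)^(M+n) * (y k).re
      = (((ν:ℤ)^n * aF ν M y k + (ν:ℤ)^(n - k.val) * (epsF y k : ℤ) : ℤ) : ℝ) := by
    intro k
    rw [re_eq hy k]
    have e1 : (ν:ℝ)^(M+n) * (ν:ℝ)^(-(M:ℤ)) = (ν:ℝ)^(n:ℕ) := by
      rw [← zpow_natCast (ν:ℝ) (M+n), ← zpow_natCast (ν:ℝ) n, ← zpow_add₀ hνne]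
      congr 1; push_cast; ring
    have e2 : (ν:ℝ)^(M+n) * (ν:ℝ)^(-(M:ℤ) - (k.val:ℤ)) = (ν:ℝ)^(n - k.val) := by
      rw [← zpow_natCast (ν:ℝ) (M+n), ← zpow_natCast (ν:ℝ) (n - k.val), ← zpow_add₀ hνne]
      congr 1
      have := k.isLt
      have hsub : ((n - k.val : ℕ) : ℤ) = (n : ℤ) - (k.val : ℤ) := by omega
      rw [hsub]; push_cast; ring
    push_cast
    rw [mul_add, ← mul_assoc, ← mul_assoc, e1, e2]
  rw [Finset.mul_sum]
  refine Finset.sum_congr rfl fun k _ => ?_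
  rw [hterm k]
  push_cast
  ring

lemma J_split {ν M n : ℕ} (y : Fin (n+1) → ℂ) :
    (∑ k : Fin (n+1), ((ν:ℤ)^n * aF ν M y k + (ν:ℤ)^(n - k.val) * (epsF y k : ℤ)))
      = (ν:ℤ)^n * ((∑ k : Fin (n+1), aF ν M y k) + (epsF y 0 : ℤ))
        + ((∑ i ∈ Finset.range n, eF y (n - i) * ν ^ i : ℕ) : ℤ) := by
  rw [Finset.sum_add_distrib, ← Finset.mul_sum]
  have step1 : (∑ i : Fin n, (ν:ℤ)^(n - (i.val + 1)) * (epsF y i.succ : ℤ))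
      = ∑ j ∈ Finset.range n, (ν:ℤ)^(n - 1 - j) * (eF y (j+1) : ℤ) := by
    rw [← Fin.sum_univ_eq_sum_range (fun j => (ν:ℤ)^(n - 1 - j) * (eF y (j+1) : ℤ)) n]
    refine Finset.sum_congr rfl fun i _ => ?_
    have hi := i.isLt
    have he : epsF y i.succ = eF y (i.val + 1) := by
      simp only [eF, epsF]
      rw [dif_pos (by omega : i.val + 1 < n + 1)]
      rfl
    rw [he]
    congr 2
    omega
  have step2 : (∑ j ∈ Finset.range n, (ν:ℤ)^(n - 1 - j) * (eF y (j+1) : ℤ))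
      = ∑ i ∈ Finset.range n, (eF y (n - i) : ℤ) * (ν:ℤ)^i := by
    rw [← Finset.sum_range_reflect (fun i => (eF y (n - i) : ℤ) * (ν:ℤ)^i) n]
    refine Finset.sum_congr rfl fun j hj => ?_
    have hjn := Finset.mem_range.mp hj
    rw [show n - (n - 1 - j) = j + 1 from by omega, mul_comm]
  have hcast : ((∑ i ∈ Finset.range n, eF y (n - i) * ν ^ i : ℕ) : ℤ)
      = ∑ i ∈ Finset.range n, (eF y (n - i) : ℤ) * (ν:ℤ)^i := by
    push_cast; rfl
  have heps : (∑ k : Fin (n+1), (ν:ℤ)^(n - k.val) * (epsF y k : ℤ))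
      = (ν:ℤ)^n * (epsF y 0 : ℤ) + ∑ i ∈ Finset.range n, (eF y (n - i) : ℤ) * (ν:ℤ)^i := by
    rw [Fin.sum_univ_succ]
    simp only [Fin.val_succ, Fin.val_zero, Nat.sub_zero]
    rw [step1, step2]
  rw [hcast, heps]
  ring

theorem stmt12 (N S ν M : ℕ) (hN : 0 < N) (hS : 1 ≤ S) (hSN : S ≤ N)
    (hν : 2 ≤ ν) (hM : 1 ≤ M) :
    ∀ x ∈ Ymark ν M N, ∀ x' ∈ Ymark ν M N,
      {k : Fin N | x k ≠ 0}.ncard ≤ S → {k : Fin N | x' k ≠ 0}.ncard ≤ S →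
      (∀ ω : Fin N, ω.val < S → dft N x ω = dft N x' ω) → x = x' := by
  intro x hx x' hx' hcx hcx' hdft
  obtain ⟨n, rfl⟩ : ∃ n, N = n + 1 := ⟨N - 1, by omega⟩
  classical
  set v : Fin (n+1) → ℂ := fun t =>
    Complex.exp (-(Complex.I * 2 * (Real.pi : ℂ) * (t.val : ℂ) / ((n+1 : ℕ) : ℂ))) with hv
  -- Step A: equality of power sums
  have hsum : ∀ m, m < S → (∑ t, v t ^ m * x t) = ∑ t, v t ^ m * x' t := by
    intro m hm
    have hω := hdft ⟨m, lt_of_lt_of_le hm hSN⟩ hm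
    simp only [dft] at hω
    have hc : ((1 / Real.sqrt ((n+1 : ℕ) : ℝ) : ℝ) : ℂ) ≠ 0 := by
      rw [Complex.ofReal_ne_zero]
      refine one_div_ne_zero (ne_of_gt (Real.sqrt_pos.mpr ?_))
      positivity
    have hcan := mul_left_cancel₀ hc hω
    have hpow : ∀ t : Fin (n+1),
        v t ^ m = Complex.exp (-(Complex.I * 2 * (Real.pi:ℂ) * (m:ℂ) * (t.val:ℂ) / ((n+1:ℕ):ℂ))) := by
      intro t
      rw [hv]
      rw [← Complex.exp_nat_mul]
      congr 1
      push_cast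
      ring
    simp only [hpow]
    exact hcan
  -- Step B: sums equal
  have h0 : (∑ t, x t) = ∑ t, x' t := by
    have := hsum 0 hS
    simpa using this
  have hresum : (∑ k, (x k).re) = ∑ k, (x' k).re := by
    have := congrArg Complex.re h0
    simpa [Complex.re_sum] using this
  -- Step C: integer equality
  have hJ : (∑ k : Fin (n+1), ((ν:ℤ)^n * aF ν M x k + (ν:ℤ)^(n - k.val) * (epsF x k : ℤ)))
      = ∑ k : Fin (n+1), ((ν:ℤ)^n * aF ν M x' k + (ν:ℤ)^(n - k.val) * (epsF x' k : ℤ)) := by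
    have hR : ((∑ k : Fin (n+1), ((ν:ℤ)^n * aF ν M x k + (ν:ℤ)^(n - k.val) * (epsF x k : ℤ))) : ℝ)
        = ((∑ k : Fin (n+1), ((ν:ℤ)^n * aF ν M x' k + (ν:ℤ)^(n - k.val) * (epsF x' k : ℤ))) : ℝ) := by
      rw [J_cast hν hx, J_cast hν hx', hresum]
    exact_mod_cast hR
  rw [J_split x, J_split x'] at hJ
  -- Step D: marker digit sums are equal
  have hE1 : ∀ (y : Fin (n+1) → ℂ) (j : ℕ), eF y j ≤ 1 := by
    intro y j
    simp only [eF]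
    split_ifs <;> omega
  have hBlt : ∀ y : Fin (n+1) → ℂ, (∑ i ∈ Finset.range n, eF y (n - i) * ν ^ i) < ν ^ n := by
    intro y
    calc (∑ i ∈ Finset.range n, eF y (n - i) * ν ^ i)
        ≤ ∑ i ∈ Finset.range n, ν ^ i := by
          refine Finset.sum_le_sum fun i _ => ?_
          have := hE1 y (n - i)
          calc eF y (n - i) * ν ^ i ≤ 1 * ν ^ i := Nat.mul_le_mul_right _ this
            _ = ν ^ i := one_mul _
      _ < ν ^ n := geomBound hν n
  have hBB : (∑ i ∈ Finset.range n, eF x (n - i) * ν ^ i)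
      = ∑ i ∈ Finset.range n, eF x' (n - i) * ν ^ i := by
    have hdvd : ((ν:ℤ)^n) ∣ (((∑ i ∈ Finset.range n, eF x' (n - i) * ν ^ i : ℕ) : ℤ)
        - ((∑ i ∈ Finset.range n, eF x (n - i) * ν ^ i : ℕ) : ℤ)) := by
      refine ⟨((∑ k : Fin (n+1), aF ν M x k) + (epsF x 0 : ℤ))
        - ((∑ k : Fin (n+1), aF ν M x' k) + (epsF x' 0 : ℤ)), ?_⟩
      linear_combination -hJ
    have hb1 : ((∑ i ∈ Finset.range n, eF x (n - i) * ν ^ i : ℕ) : ℤ) < (ν:ℤ)^n := by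
      exact_mod_cast hBlt x
    have hb2 : ((∑ i ∈ Finset.range n, eF x' (n - i) * ν ^ i : ℕ) : ℤ) < (ν:ℤ)^n := by
      exact_mod_cast hBlt x'
    have hge1 : (0:ℤ) ≤ ((∑ i ∈ Finset.range n, eF x (n - i) * ν ^ i : ℕ) : ℤ) := Int.natCast_nonneg _
    have hge2 : (0:ℤ) ≤ ((∑ i ∈ Finset.range n, eF x' (n - i) * ν ^ i : ℕ) : ℤ) := Int.natCast_nonneg _
    have habs := Int.eq_zero_of_abs_lt_dvd hdvd (abs_sub_lt_iff.mpr ⟨by omega, by omega⟩)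
    omega
  have hdig := digitsUnique hν n (fun i => eF x (n - i)) (fun i => eF x' (n - i))
    (fun i => by show eF x (n - i) < ν; have := hE1 x (n - i); omega)
    (fun i => by show eF x' (n - i) < ν; have := hE1 x' (n - i); omega) hBB
  -- Step E: supports agree away from 0
  have hsupp : ∀ k : Fin (n+1), k.val ≠ 0 → (x k ≠ 0 ↔ x' k ≠ 0) := by
    intro k hk
    have hkn := k.isLt
    have h1 := hdig (n - k.val) (by omega)
    beta_reduce at h1
    rw [show n - (n - k.val) = k.val from by omega] at h1
    simp only [eF, dif_pos k.isLt, Fin.eta] at h1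
    constructor <;> intro hne <;> by_contra hc <;> simp [hne, hc] at h1
  -- Step F: the union of the supports has at most S elements
  set Kx : Finset (Fin (n+1)) := Finset.univ.filter (fun k => x k ≠ 0) with hKxdef
  set Kx' : Finset (Fin (n+1)) := Finset.univ.filter (fun k => x' k ≠ 0) with hKx'def
  have hKx : Kx.card ≤ S := by
    rw [← Set.ncard_coe_finset] at *
    have : {k : Fin (n+1) | x k ≠ 0} = ↑Kx := by ext k; simp [hKxdef]
    rwa [this] at hcx
  have hKx' : Kx'.card ≤ S := by
    rw [← Set.ncard_coe_finset] at *
    have : {k : Fin (n+1) | x' k ≠ 0} = ↑Kx' := by ext k; simp [hKx'def]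
    rwa [this] at hcx'
  set D : Finset (Fin (n+1)) := Kx ∪ Kx' with hDdef
  have hDcard : D.card ≤ S := by
    by_cases h0' : x' 0 ≠ 0
    · have hsub : Kx ⊆ Kx' := by
        intro k hk
        simp only [hKxdef, hKx'def, Finset.mem_filter, Finset.mem_univ, true_and] at hk ⊢
        by_cases hk0 : k.val = 0
        · have : k = 0 := Fin.ext (by simpa using hk0)
          rw [this]; exact h0'
        · exact (hsupp k hk0).mp hk
      have hsubD : D ⊆ Kx' := Finset.union_subset hsub (Finset.Subset.refl _)
      exact le_trans (Finset.card_le_card hsubD) hKx'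
    · push_neg at h0'
      have hsub : Kx' ⊆ Kx := by
        intro k hk
        simp only [hKxdef, hKx'def, Finset.mem_filter, Finset.mem_univ, true_and] at hk ⊢
        by_cases hk0 : k.val = 0
        · have : k = 0 := Fin.ext (by simpa using hk0)
          rw [this] at hk; exact absurd h0' hk
        · exact (hsupp k hk0).mpr hk
      have hsubD : D ⊆ Kx := Finset.union_subset (Finset.Subset.refl _) hsub
      exact le_trans (Finset.card_le_card hsubD) hKx
  -- Step G: the difference vanishes on D
  have hzero : ∀ m, m < S → ∑ t ∈ D, v t ^ m * (x t - x' t) = 0 := by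
    intro m hm
    have h1 : ∑ t ∈ (Finset.univ : Finset (Fin (n+1))), v t ^ m * (x t - x' t) = 0 := by
      have h2 : ∑ t ∈ (Finset.univ : Finset (Fin (n+1))), v t ^ m * (x t - x' t)
          = (∑ t, v t ^ m * x t) - ∑ t, v t ^ m * x' t := by
        rw [← Finset.sum_sub_distrib]
        exact Finset.sum_congr rfl fun t _ => by ring
      rw [h2, hsum m hm, sub_self]
    rw [← h1]
    refine Finset.sum_subset (Finset.subset_univ D) fun t _ ht => ?_
    simp only [hDdef, hKxdef, hKx'def, Finset.mem_union, Finset.mem_filter,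
      Finset.mem_univ, true_and, not_or, not_not] at ht
    rw [ht.1, ht.2, sub_self, mul_zero]
  have hinj : Set.InjOn v ↑D := fun a _ b _ h => nodes_inj n h
  have hvanish := vandermonde_vanish D v hinj (fun t => x t - x' t) hDcard hzero
  funext k
  by_cases hk : k ∈ D
  · have := hvanish k hk
    exact sub_eq_zero.mp this
  · simp only [hDdef, hKxdef, hKx'def, Finset.mem_union, Finset.mem_filter,
      Finset.mem_univ, true_and, not_or, not_not] at hk
    rw [hk.1, hk.2]
end

section
/- Let ν ≥ 2, M ≥ 1, N ≥ 1. For any x ∈ Y_{ν,M} (components of form ρ_{ν,M}(x_k) + ν^{-M-k}𝟙_{x_k≠0}), and any μ ≥ M + N, the rounding ρ_{ν,μ}(x) has the same support as x: {k : ρ_{ν,μ}(x_k) ≠ 0} = {k : x_k ≠ 0}. -/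
lemma trunc_intCast (n : ℤ) : trunc (n:ℝ) = n := by
  unfold trunc; split <;> simp

lemma rnd_fix (ν μ : ℕ) (hν : (ν:ℝ) ≠ 0) (a : ℝ) (n : ℤ)
    (h : (ν:ℝ)^(μ:ℤ) * a = n) : rnd ν μ a = a := by
  unfold rnd
  rw [h, trunc_intCast, ← h, zpow_neg, inv_mul_cancel_left₀ (zpow_ne_zero _ hν)]

lemma rnd_key (ν M k μ : ℕ) (hν : 2 ≤ ν) (hMk : M + k ≤ μ) (a : ℝ) (ε : ℤ)
    (h : a = rnd ν M a + ε * (ν:ℝ)^(-(M:ℤ)-(k:ℤ))) : rnd ν μ a = a := by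
  have hν0 : (ν:ℝ) ≠ 0 := by positivity
  apply rnd_fix ν μ hν0 a ((ν:ℤ)^(μ-M) * trunc ((ν:ℝ)^(M:ℤ) * a) + ε * (ν:ℤ)^(μ-(M+k)))
  push_cast
  rw [← zpow_natCast (ν:ℝ) (μ-M), ← zpow_natCast (ν:ℝ) (μ-(M+k)),
    Nat.cast_sub (le_trans (Nat.le_add_right M k) hMk), Nat.cast_sub hMk]
  push_cast
  conv_lhs => rw [h]
  unfold rnd
  rw [mul_add]
  rw [show ((ν:ℝ)^(μ:ℤ) * ((ν:ℝ)^(-(M:ℤ)) * (trunc ((ν:ℝ)^(M:ℤ) * a) : ℤ))) =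
    (ν:ℝ)^((μ:ℤ) - M) * (trunc ((ν:ℝ)^(M:ℤ) * a) : ℤ) by
      rw [← mul_assoc, ← zpow_add₀ hν0]; ring_nf]
  rw [show ((ν:ℝ)^(μ:ℤ) * ((ε:ℝ) * (ν:ℝ)^(-(M:ℤ)-(k:ℤ)))) =
    (ε:ℝ) * (ν:ℝ)^((μ:ℤ) - (M + k)) by
      rw [mul_comm ((ε:ℝ)) _, ← mul_assoc, ← zpow_add₀ hν0]; ring_nf]

theorem stmt16 (ν M N : ℕ) (hν : 2 ≤ ν) (hM : 1 ≤ M) (hN : 1 ≤ N)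
    (x : Fin N → ℂ) (hx : x ∈ Ymark ν M N) (μ : ℕ) (hμ : M + N ≤ μ) :
    {k : Fin N | rndC ν μ (x k) ≠ 0} = {k : Fin N | x k ≠ 0} := by
  have key : ∀ k : Fin N, rndC ν μ (x k) = x k := by
    intro k
    have hk := hx k
    have hMk : M + k.val ≤ μ := by have := k.isLt; omega
    set ε : ℤ := if x k ≠ 0 then 1 else 0 with hε
    set c : ℝ := (ε:ℝ) * (ν:ℝ)^(-(M:ℤ)-(k.val:ℤ)) with hc
    have hk2 : x k = rndC ν M (x k) + (c : ℂ) := by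
      have hmark : ((ν:ℂ) ^ (-(M:ℤ)-(k.val:ℤ))) * (if x k ≠ 0 then 1 else 0)
          = (c : ℂ) := by
        rw [hc]
        push_cast [Complex.ofReal_zpow, hε]
        split <;> simp
      conv_lhs => rw [hk]
      rw [zetaMark, hmark]
    have hre : (x k).re = rnd ν M (x k).re + ε * (ν:ℝ)^(-(M:ℤ)-(k.val:ℤ)) := by
      rw [← hc]
      conv_lhs => rw [hk2]
      simp [rndC]
    have him : (x k).im = rnd ν M (x k).im + (0:ℤ) * (ν:ℝ)^(-(M:ℤ)-(k.val:ℤ)) := by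
      conv_lhs => rw [hk2]
      simp [rndC]
    rw [rndC, rnd_key ν M k.val μ hν hMk _ _ hre, rnd_key ν M k.val μ hν hMk _ _ him]
    exact (Complex.re_add_im (x k))
  ext k
  simp [key k]
end
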